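/- For all n > 0: L_{3n}(1, -1, q) = (-1)^n (q^{n(3n-1)/2} + q^{n(3n+1)/2}); and for all n ≥ 0: L_{3n+1}(1, -1, q) = (-1)^n q^{n(3n+1)/2}; and for all n ≥ 1: L_{3n-1}(1, -1, q) = (-1)^n q^{n(3n-1)/2}. -/

import Mathlib

open Finset

noncomputable section

abbrev K : Type := RatFunc ℚ

def q : K := RatFunc.X

def qint (a : K) (m : ℕ) : K := ∑ i ∈ range m, a ^ i

def qfact (a : K) (m : ℕ) : K := ∏ i ∈ range m, qint a (i + 1)

def qbinom (a : K) (n k : ℕ) : K :=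
  if k ≤ n then qfact a n / (qfact a k * qfact a (n - k)) else 0

/-- q-Fibonacci polynomials F_n(x,s,q) with base `a`. -/
def qF (a x s : K) : ℕ → K
  | 0 => 0
  | n + 1 => ∑ k ∈ range (n / 2 + 1),
      a ^ (k * (k + 1) / 2) * qbinom a (n - k) k * s ^ k * x ^ (n - 2 * k)

/-- q-Lucas polynomials L_n(x,s,q) with base `a` (L_0 = 2). -/
def qL (a x s : K) (n : ℕ) : K :=
  if n = 0 then 2 else
  ∑ k ∈ range (n / 2 + 1),
    a ^ (k * (k - 1) / 2) * (qint a n / qint a (n - k)) * qbinom a (n - k) k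
      * s ^ k * x ^ (n - 2 * k)

/-- Starred variant: L*_0 = 1, L*_n = L_n for n > 0. -/
def qLs (a x s : K) (n : ℕ) : K := if n = 0 then 1 else qL a x s n

/-- Rogers-Szegő polynomial. -/
def rs (a x y : K) (m : ℕ) : K := ∑ j ∈ range (m + 1), qbinom a m j * x ^ j * y ^ (m - j)

/-- q-Pochhammer (q;q)_m. -/
def qpoch (a : K) (m : ℕ) : K := ∏ j ∈ range m, (1 - a ^ (j + 1))

/-! Splitting `[n] = [n-k] + q^(n-k) [k]` in the coefficient `[n]/[n-k]` gives
`L_{n+2}(1,s) = F_{n+2}(s) + q^(n+1) s F_n(s)`, where `F_n(s) = ∑ q^(k(k-1)/2) qbinom(n-k,k) s^k`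
is `fibSum s n`.
The two q-Pascal rules give `F_{n+2}(s) = F_{n+1}(qs) + s F_n(qs)` and
`F_{n+2}(qs) = F_{n+1}(qs) + q^(n+1) s F_n(s)`; at `qs = -1` they combine into a four-term
recurrence for `F_n(-1)`, which is solved by the pentagonal powers
`F_{3m}(-1) = (-1)^m q^(m(3m-1)/2)`, `F_{3m+1}(-1) = (-1)^m q^(m(3m+1)/2)`, `F_{3m+2}(-1) = 0`. -/

lemma q_ne_zero : q ≠ 0 := RatFunc.X_ne_zero

lemma qint_add (a : K) (m n : ℕ) : qint a (m + n) = qint a m + a ^ m * qint a n := by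
  simp only [qint, sum_range_add, pow_add, mul_sum]

lemma qint_q_ne_zero {m : ℕ} (hm : m ≠ 0) : qint q m ≠ 0 := by
  have h : qint q m = algebraMap (Polynomial ℚ) K (∑ i ∈ range m, Polynomial.X ^ i) := by
    simp [qint, q, RatFunc.algebraMap_X]
  rw [h]
  refine RatFunc.algebraMap_ne_zero fun h0 => hm ?_
  simpa [Polynomial.eval_finsetSum] using congrArg (Polynomial.eval 1) h0

lemma qfact_q_ne_zero (m : ℕ) : qfact q m ≠ 0 :=
  prod_ne_zero_iff.2 fun _ _ => qint_q_ne_zero (Nat.succ_ne_zero _)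

lemma qfact_zero (a : K) : qfact a 0 = 1 := prod_range_zero _

lemma qfact_succ (a : K) (m : ℕ) : qfact a (m + 1) = qfact a m * qint a (m + 1) :=
  prod_range_succ _ _

lemma qbinom_eq_zero_of_lt (a : K) {n k : ℕ} (h : n < k) : qbinom a n k = 0 := by
  simp [qbinom, Nat.not_le.2 h]

lemma qbinom_add_left (a : K) (m k : ℕ) :
    qbinom a (m + k) k = qfact a (m + k) / (qfact a k * qfact a m) := by
  simp [qbinom]

lemma qbinom_q_zero_right (n : ℕ) : qbinom q n 0 = 1 := by
  simpa [qfact_zero, qfact_q_ne_zero] using qbinom_add_left q n 0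

lemma qbinom_q_self (n : ℕ) : qbinom q n n = 1 := by
  simpa [qfact_zero, qfact_q_ne_zero] using qbinom_add_left q 0 n

lemma qbinom_q_succ_succ (n k : ℕ) :
    qbinom q (n + 1) (k + 1) = q ^ (k + 1) * qbinom q n (k + 1) + qbinom q n k := by
  rcases lt_or_ge n k with h | h
  · simp [qbinom_eq_zero_of_lt q h, qbinom_eq_zero_of_lt q (Nat.lt_succ_of_lt h),
      qbinom_eq_zero_of_lt q (Nat.succ_lt_succ h)]
  obtain ⟨m, rfl⟩ := Nat.exists_eq_add_of_le' h
  rcases m with _ | m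
  · simp [qbinom_q_self, qbinom_eq_zero_of_lt q (Nat.lt_succ_self k)]
  rw [qbinom_add_left q (m + 1) k, show m + 1 + k = m + (k + 1) by omega, qbinom_add_left,
    show m + (k + 1) + 1 = m + 1 + (k + 1) by omega, qbinom_add_left,
    show m + 1 + (k + 1) = m + (k + 1) + 1 by omega, qfact_succ q (m + (k + 1)),
    show m + (k + 1) + 1 = (k + 1) + (m + 1) by omega, qint_add, qfact_succ q k, qfact_succ q m]
  field_simp [qfact_q_ne_zero, qint_q_ne_zero (Nat.succ_ne_zero k),
    qint_q_ne_zero (Nat.succ_ne_zero m)]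
  ring

lemma qbinom_q_succ_succ' (n k : ℕ) :
    qbinom q (n + 1) (k + 1) = qbinom q n (k + 1) + q ^ (n - k) * qbinom q n k := by
  rcases lt_or_ge n k with h | h
  · simp [qbinom_eq_zero_of_lt q h, qbinom_eq_zero_of_lt q (Nat.lt_succ_of_lt h),
      qbinom_eq_zero_of_lt q (Nat.succ_lt_succ h)]
  obtain ⟨m, rfl⟩ := Nat.exists_eq_add_of_le' h
  rcases m with _ | m
  · simp [qbinom_q_self, qbinom_eq_zero_of_lt q (Nat.lt_succ_self k)]
  rw [Nat.add_sub_cancel, qbinom_add_left q (m + 1) k, show m + 1 + k = m + (k + 1) by omega,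
    qbinom_add_left, show m + (k + 1) + 1 = m + 1 + (k + 1) by omega, qbinom_add_left,
    show m + 1 + (k + 1) = m + (k + 1) + 1 by omega, qfact_succ q (m + (k + 1)),
    show m + (k + 1) + 1 = (m + 1) + (k + 1) by omega, qint_add, qfact_succ q k, qfact_succ q m]
  field_simp [qfact_q_ne_zero, qint_q_ne_zero (Nat.succ_ne_zero k),
    qint_q_ne_zero (Nat.succ_ne_zero m)]

lemma qint_mul_qbinom_q (n k : ℕ) :
    qint q (n + 1) * qbinom q n k = qint q (k + 1) * qbinom q (n + 1) (k + 1) := by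
  rcases lt_or_ge n k with h | h
  · simp [qbinom_eq_zero_of_lt q h, qbinom_eq_zero_of_lt q (Nat.succ_lt_succ h)]
  obtain ⟨m, rfl⟩ := Nat.exists_eq_add_of_le' h
  rw [qbinom_add_left, show m + k + 1 = m + (k + 1) by omega, qbinom_add_left,
    show m + (k + 1) = m + k + 1 by omega, qfact_succ q (m + k), qfact_succ q k]
  field_simp [qfact_q_ne_zero, qint_q_ne_zero (Nat.succ_ne_zero k)]

lemma qint_div_qint_mul_qbinom_q (r j : ℕ) :
    qint q (r + j + 2) / qint q (r + 1) * qbinom q (r + 1) (j + 1)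
      = qbinom q (r + 1) (j + 1) + q ^ (r + 1) * qbinom q r j := by
  rw [show r + j + 2 = (r + 1) + (j + 1) by omega, qint_add]
  field_simp [qint_q_ne_zero (Nat.succ_ne_zero r)]
  linear_combination -q ^ (r + 1) * qint_mul_qbinom_q r j

def fibSum (s : K) (n : ℕ) : K := ∑ k ∈ range (n + 1), q ^ k.choose 2 * qbinom q (n - k) k * s ^ k

lemma fibSum_eq_sum_range (s : K) {n N : ℕ} (h : n < 2 * N) :
    fibSum s n = ∑ k ∈ range N, q ^ k.choose 2 * qbinom q (n - k) k * s ^ k := by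
  have hvanish : ∀ k ≥ n / 2 + 1, q ^ k.choose 2 * qbinom q (n - k) k * s ^ k = 0 := fun k hk => by
    rw [qbinom_eq_zero_of_lt q (by omega), mul_zero, zero_mul]
  rw [fibSum, eventually_constant_sum hvanish (by omega),
    eventually_constant_sum hvanish (n := N) (by omega)]

lemma fibSum_add_two (s : K) (n : ℕ) :
    fibSum s (n + 2) = fibSum (q * s) (n + 1) + s * fibSum (q * s) n := by
  rw [fibSum_eq_sum_range s (N := n + 2) (by omega), fibSum_eq_sum_range _ (N := n + 2) (by omega),
    fibSum, mul_sum, sum_range_succ' _ (n + 1), sum_range_succ' _ (n + 1), add_right_comm,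
    ← sum_add_distrib]
  congr 1
  · refine sum_congr rfl fun j hj => ?_
    rw [mem_range] at hj
    rw [show n + 2 - (j + 1) = n - j + 1 by omega, show n + 1 - (j + 1) = n - j by omega,
      qbinom_q_succ_succ, Nat.choose_succ_succ', Nat.choose_one_right]
    ring
  · simp [qbinom_q_zero_right]

lemma fibSum_add_two' (s : K) (n : ℕ) :
    fibSum (q * s) (n + 2) = fibSum (q * s) (n + 1) + q ^ (n + 1) * s * fibSum s n := by
  rw [fibSum_eq_sum_range _ (N := n + 2) (by omega), fibSum_eq_sum_range _ (N := n + 2) (by omega),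
    fibSum, mul_sum, sum_range_succ' _ (n + 1), sum_range_succ' _ (n + 1), add_right_comm,
    ← sum_add_distrib]
  congr 1
  · refine sum_congr rfl fun j hj => ?_
    rw [mem_range] at hj
    rw [show n + 2 - (j + 1) = n - j + 1 by omega, show n + 1 - (j + 1) = n - j by omega,
      qbinom_q_succ_succ', Nat.choose_succ_succ', Nat.choose_one_right]
    rcases le_or_gt (2 * j) n with hj2 | hj2
    · have hpow : q ^ (n - j - j) * q ^ (j + j) = q ^ n := by rw [← pow_add]; congr 1; omega
      linear_combination (q ^ j.choose 2 * q * s ^ (j + 1) * qbinom q (n - j) j) * hpow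
    · simp [qbinom_eq_zero_of_lt q (show n - j < j by omega)]
  · simp [qbinom_q_zero_right]

lemma fibSum_zero (s : K) : fibSum s 0 = 1 := by
  simp [fibSum, qbinom_q_zero_right]

lemma fibSum_one (s : K) : fibSum s 1 = 1 := by
  simp [fibSum, sum_range_succ, qbinom_q_zero_right, qbinom_eq_zero_of_lt]

lemma q_mul_neg_inv : q * -q⁻¹ = -1 := by
  rw [mul_neg, mul_inv_cancel₀ q_ne_zero]

lemma fibSum_neg_one_add_four (n : ℕ) :
    fibSum (-1) (n + 4) = fibSum (-1) (n + 3) - q ^ (n + 2) * fibSum (-1) (n + 1)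
      + q ^ (n + 1) * fibSum (-1) n := by
  have h := fibSum_add_two' (-q⁻¹) (n + 2)
  rw [fibSum_add_two (-q⁻¹) n, q_mul_neg_inv] at h
  rw [h]
  field_simp [q_ne_zero]
  ring

/-- The last conjunct is the first one at `m + 1`; carrying it along gives the four consecutive
values the recurrence `fibSum_neg_one_add_four` needs. -/
lemma fibSum_neg_one_three_mul (m : ℕ) :
    fibSum (-1) (3 * m) = (-1) ^ m * q ^ (3 * m.choose 2 + m) ∧
    fibSum (-1) (3 * m + 1) = (-1) ^ m * q ^ (3 * m.choose 2 + 2 * m) ∧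
    fibSum (-1) (3 * m + 2) = 0 ∧
    fibSum (-1) (3 * m + 3) = (-1) ^ (m + 1) * q ^ (3 * m.choose 2 + 4 * m + 1) := by
  induction m with
  | zero =>
    have h2 : fibSum (-1) 2 = 0 := by
      rw [fibSum_add_two, fibSum_zero, fibSum_one]; ring
    refine ⟨by simp [fibSum_zero], by simp [fibSum_one], h2, ?_⟩
    have h3 := fibSum_add_two' (-q⁻¹) 1
    rw [q_mul_neg_inv, h2, fibSum_one] at h3
    rw [h3]
    field_simp [q_ne_zero]
    simp [sq]
  | succ m ih =>
    obtain ⟨h0, h1, h2, h3⟩ := ih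
    have h4 := fibSum_neg_one_add_four (3 * m)
    have h5 := fibSum_neg_one_add_four (3 * m + 1)
    have h6 := fibSum_neg_one_add_four (3 * m + 2)
    simp only [show 3 * m + 1 + 3 = 3 * m + 4 by ring, show 3 * m + 2 + 3 = 3 * m + 5 by ring,
      show 3 * m + 2 + 4 = 3 * m + 6 by ring, show 3 * m + 1 + 1 = 3 * m + 2 by ring, show 3 * m + 2 + 1 = 3 * m + 3 by ring,
      h0, h1, h2, h3] at h4 h5 h6
    rw [Nat.choose_succ_succ', Nat.choose_one_right,
      show 3 * (m + 1) = 3 * m + 3 by ring, show 3 * m + 3 + 1 = 3 * m + 4 by ring,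
      show 3 * m + 3 + 2 = 3 * m + 5 by ring, show 3 * m + 3 + 3 = 3 * m + 6 by ring]
    refine ⟨by rw [h3]; ring, by rw [h4]; ring, by rw [h5, h4]; ring, by rw [h6, h5, h4]; ring⟩

lemma qL_q_one_add_two (s : K) (n : ℕ) :
    qL q 1 s (n + 2) = fibSum s (n + 2) + q ^ (n + 1) * s * fibSum s n := by
  rw [qL, if_neg (by omega), show (n + 2) / 2 + 1 = n / 2 + 2 by omega,
    fibSum_eq_sum_range s (N := n / 2 + 2) (by omega),
    fibSum_eq_sum_range s (N := n / 2 + 1) (by omega), mul_sum, sum_range_succ' _ (n / 2 + 1),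
    sum_range_succ' _ (n / 2 + 1), add_right_comm, ← sum_add_distrib]
  congr 1
  · refine sum_congr rfl fun j hj => ?_
    rw [mem_range] at hj
    have h := qint_div_qint_mul_qbinom_q (n - j) j
    have hpow : q ^ (n - j + 1) * q ^ j = q ^ (n + 1) := by rw [← pow_add]; congr 1; omega
    rw [show n - j + j + 2 = n + 2 by omega] at h
    rw [show n + 2 - (j + 1) = n - j + 1 by omega, ← Nat.choose_two_right, one_pow, mul_one,
      Nat.choose_succ_succ', Nat.choose_one_right]
    linear_combination (q ^ (j.choose 2 + j) * s ^ (j + 1)) * h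
      + (q ^ j.choose 2 * qbinom q (n - j) j * s ^ (j + 1)) * hpow
  · simp [qbinom_q_zero_right, qint_q_ne_zero]

lemma qL_q_one (x s : K) : qL q x s 1 = x := by
  simp [qL, qint, qbinom_q_zero_right]

lemma mul_three_mul_sub_one_div_two (n : ℕ) : n * (3 * n - 1) / 2 = 3 * n.choose 2 + n := by
  rcases n with _ | n
  · rfl
  have hC := Nat.add_one_mul_choose_eq n 1
  rw [Nat.choose_one_right, one_add_one_eq_two] at hC
  rw [show (n + 1) * (3 * (n + 1) - 1) = 3 * ((n + 1) * n) + 2 * (n + 1) by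
    rw [show 3 * (n + 1) - 1 = 3 * n + 2 by omega]; ring, hC]
  omega

lemma mul_three_mul_add_one_div_two (n : ℕ) : n * (3 * n + 1) / 2 = 3 * n.choose 2 + 2 * n := by
  rcases n with _ | n
  · rfl
  have hC := Nat.add_one_mul_choose_eq n 1
  rw [Nat.choose_one_right, one_add_one_eq_two] at hC
  rw [show (n + 1) * (3 * (n + 1) + 1) = 3 * ((n + 1) * n) + 4 * (n + 1) by ring, hC]
  omega

theorem stmt16 :
    (∀ n : ℕ, 0 < n →
      qL q 1 (-1) (3 * n) = (-1 : K) ^ n * (q ^ (n * (3 * n - 1) / 2) + q ^ (n * (3 * n + 1) / 2))) ∧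
    (∀ n : ℕ, qL q 1 (-1) (3 * n + 1) = (-1 : K) ^ n * q ^ (n * (3 * n + 1) / 2)) ∧
    (∀ n : ℕ, 1 ≤ n →
      qL q 1 (-1) (3 * n - 1) = (-1 : K) ^ n * q ^ (n * (3 * n - 1) / 2)) := by
  simp only [mul_three_mul_sub_one_div_two, mul_three_mul_add_one_div_two]
  refine ⟨fun n hn => ?_, fun n => ?_, fun n hn => ?_⟩
  · obtain ⟨m, rfl⟩ := Nat.exists_eq_add_of_le' hn
    obtain ⟨-, h1, -, h3⟩ := fibSum_neg_one_three_mul m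
    rw [show 3 * (m + 1) = 3 * m + 1 + 2 by ring, qL_q_one_add_two, h1, h3,
      Nat.choose_succ_succ', Nat.choose_one_right]
    ring
  · rcases n with _ | m
    · simpa using qL_q_one 1 (-1)
    obtain ⟨-, -, h2, -⟩ := fibSum_neg_one_three_mul m
    obtain ⟨-, h4, -, -⟩ := fibSum_neg_one_three_mul (m + 1)
    rw [show 3 * (m + 1) + 1 = 3 * m + 2 + 2 by ring, qL_q_one_add_two, h2,
      show 3 * m + 2 + 2 = 3 * (m + 1) + 1 by ring, h4]
    ring
  · obtain ⟨m, rfl⟩ := Nat.exists_eq_add_of_le' hn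
    obtain ⟨h0, -, h2, -⟩ := fibSum_neg_one_three_mul m
    rw [show 3 * (m + 1) - 1 = 3 * m + 2 by omega, qL_q_one_add_two, h0, h2,
      Nat.choose_succ_succ', Nat.choose_one_right]
    ring
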